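/- Let V : ℂ^{d_A} → ℂ^{M} be an isometry (V†V = 1_A), {|z⟩}_{z=1}^{M} an orthonormal basis of ℂ^{M}, and ρ_A a density matrix on ℂ^{d_A} with D(ρ_A, 1_A/d_A) ≤ δ where δ ≤ 1/(2 d_A). For each z with V†|z⟩ ≠ 0, define |ψ_z⟩ := √ρ_A V†|z⟩ / ‖√ρ_A V†|z⟩‖ and |φ_z⟩ := V†|z⟩ / ‖V†|z⟩‖. Then the fidelity satisfies |⟨ψ_z|φ_z⟩|² ≥ (1 − 2 d_A δ)/(1 + 2 δ d_A). -/

import Mathlib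

/- Common definitions: trace norm, trace distance, Kronecker powers, outer products,
post-measurement ensembles, row ensembles of isometries, and Haar moment operators. -/

open scoped BigOperators ComplexConjugate ComplexOrder
open MeasureTheory Matrix
open scoped MatrixOrder

noncomputable section

instance {m n : Type*} : MeasurableSpace (Matrix m n ℂ) := borel _
instance {m n : Type*} : BorelSpace (Matrix m n ℂ) := ⟨rfl⟩

/-- The trace norm (Schatten 1-norm) `‖A‖₁ = Tr[√(AᴴA)]`. -/
def traceNorm {n : Type*} [Fintype n] [DecidableEq n] (A : Matrix n n ℂ) : ℝ :=
  ((CFC.sqrt (Aᴴ * A)).trace).re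

/-- The trace distance `D(A,B) = ‖A - B‖₁ / 2`. -/
def traceDist {n : Type*} [Fintype n] [DecidableEq n] (A B : Matrix n n ℂ) : ℝ :=
  traceNorm (A - B) / 2

/-- The Hilbert-Schmidt (Frobenius) norm `‖A‖₂ = √(Tr[AᴴA])`. -/
def hsNorm {m n : Type*} [Fintype m] [Fintype n] (A : Matrix m n ℂ) : ℝ :=
  Real.sqrt ((Aᴴ * A).trace).re

/-- The `k`-fold tensor (Kronecker) power of a matrix on `ℂ^d`,
as an operator on `(ℂ^d)^{⊗ k}`. -/
def tpow {d : ℕ} (ρ : Matrix (Fin d) (Fin d) ℂ) (k : ℕ) :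
    Matrix (Fin k → Fin d) (Fin k → Fin d) ℂ :=
  Matrix.of fun x y => ∏ i, ρ (x i) (y i)

/-- The tensor product `ρ^{⊗ l} ⊗ A ⊗ ρ^{⊗ (k - (l+1))}` on `(ℂ^d)^{⊗ k}`,
with `A` inserted at position `l`. -/
def tpowIns {d : ℕ} (ρ A : Matrix (Fin d) (Fin d) ℂ) (k l : ℕ) :
    Matrix (Fin k → Fin d) (Fin k → Fin d) ℂ :=
  Matrix.of fun x y => ∏ i : Fin k, if (i : ℕ) = l then A (x i) (y i) else ρ (x i) (y i)

/-- The outer product (rank-one projection for a unit vector) `|v⟩⟨v|`. -/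
def outer {d : ℕ} (v : Fin d → ℂ) : Matrix (Fin d) (Fin d) ℂ :=
  Matrix.of fun i j => v i * star (v j)

/-- Squared Euclidean norm of a vector in `ℂ^d`. -/
def nsq {d : ℕ} (v : Fin d → ℂ) : ℝ := ∑ i, Complex.normSq (v i)

/-- Euclidean norm of a vector in `ℂ^d`. -/
def l2norm {d : ℕ} (v : Fin d → ℂ) : ℝ := Real.sqrt (nsq v)

/-- The normalization `v / ‖v‖` of a vector. -/
def normalizeVec {d : ℕ} (v : Fin d → ℂ) : Fin d → ℂ :=
  fun i => v i / (Real.sqrt (nsq v) : ℂ)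

/-- For an unnormalized vector `v` with weight `p = ‖v‖²`, the contribution
`p (|v/‖v‖⟩⟨v/‖v‖|)^{⊗ k}` to a `k`-th moment operator (zero when `v = 0`,
i.e. the ensemble member occurs with probability zero). -/
def momentTerm {d : ℕ} (v : Fin d → ℂ) (k : ℕ) :
    Matrix (Fin k → Fin d) (Fin k → Fin d) ℂ :=
  if v = 0 then 0 else ((nsq v : ℝ) : ℂ) • tpow (outer (normalizeVec v)) k

/-- The `k`-th moment operator `∑_{z : v_z ≠ 0} p_z (|ψ_z⟩⟨ψ_z|)^{⊗ k}` of the row ensemble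
induced by `V : ℂ^{d_A} → ℂ^M` with respect to the orthonormal basis `e` of `ℂ^M`:
`⟨v_z| := ⟨z|V`, `|ψ_z⟩ := |v_z⟩/‖v_z‖`, `p_z := ‖v_z‖²/d_A`. -/
def rowMoment {dA M : ℕ} (V : Matrix (Fin M) (Fin dA) ℂ) (e : Fin M → Fin M → ℂ) (k : ℕ) :
    Matrix (Fin k → Fin dA) (Fin k → Fin dA) ℂ :=
  ((dA : ℂ))⁻¹ • ∑ z, momentTerm (fun j => star (Matrix.vecMul (star (e z)) V j)) k

/-- The `k`-th moment operator `∑_{z : p_z > 0} p_z (|ψ_z⟩⟨ψ_z|)^{⊗ k}` of the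
post-measurement ensemble of the pure state `Ψ ∈ ℂ^{d_A} ⊗ ℂ^M` measured on the second
factor in the orthonormal basis `b`: `p_z := ⟨Ψ|(1 ⊗ |b_z⟩⟨b_z|)|Ψ⟩` and
`|ψ_z⟩ := (1 ⊗ ⟨b_z|)|Ψ⟩ / √p_z`. -/
def postMoment {dA M : ℕ} (Ψ : Fin dA × Fin M → ℂ) (b : Fin M → (Fin M → ℂ)) (k : ℕ) :
    Matrix (Fin k → Fin dA) (Fin k → Fin dA) ℂ :=
  ∑ z, momentTerm (fun i => dotProduct (star (b z)) (fun w => Ψ (i, w))) k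

/-- The `k`-th Haar moment operator `∫ (U|e₁⟩⟨e₁|Uᴴ)^{⊗ k} dU` on `(ℂ^d)^{⊗ k}`,
where `ν` is the (normalized) Haar measure on the unitary group `U(d)`. -/
def haarMoment {d : ℕ} [NeZero d] (ν : Measure (Matrix.unitaryGroup (Fin d) ℂ)) (k : ℕ) :
    Matrix (Fin k → Fin d) (Fin k → Fin d) ℂ :=
  Matrix.of fun x y =>
    ∫ U, (∏ i, ((U : Matrix (Fin d) (Fin d) ℂ) (x i) 0 *
      star ((U : Matrix (Fin d) (Fin d) ℂ) (y i) 0))) ∂ν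

lemma qform_udu {n : ℕ} (U : Matrix (Fin n) (Fin n) ℂ)
    (d : Fin n → ℂ) (v : Fin n → ℂ) :
    dotProduct (star v) ((U * Matrix.diagonal d * Uᴴ) *ᵥ v)
      = ∑ i, d i * (Complex.normSq ((Uᴴ *ᵥ v) i) : ℂ) := by
  set c := Uᴴ *ᵥ v with hc
  have h1 : (U * Matrix.diagonal d * Uᴴ) *ᵥ v = U *ᵥ (Matrix.diagonal d *ᵥ c) := by
    rw [← Matrix.mulVec_mulVec, ← Matrix.mulVec_mulVec]
  have h2 : star v ᵥ* U = star c := by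
    rw [hc, Matrix.star_mulVec, Matrix.conjTranspose_conjTranspose]
  rw [h1, Matrix.dotProduct_mulVec, h2]
  simp only [dotProduct, Matrix.mulVec_diagonal, Pi.star_apply]
  refine Finset.sum_congr rfl fun i _ => ?_
  rw [Complex.normSq_eq_conj_mul_self]
  simp only [Complex.star_def]
  ring

lemma mul_udu {n : ℕ} (U : Matrix (Fin n) (Fin n) ℂ) (hU : U ∈ Matrix.unitaryGroup (Fin n) ℂ)
    (d₁ d₂ : Fin n → ℂ) :
    (U * Matrix.diagonal d₁ * Uᴴ) * (U * Matrix.diagonal d₂ * Uᴴ)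
      = U * Matrix.diagonal (fun i => d₁ i * d₂ i) * Uᴴ := by
  have hUU : Uᴴ * U = 1 := by
    have := Matrix.mem_unitaryGroup_iff'.mp hU
    simpa [Matrix.star_eq_conjTranspose] using this
  calc (U * Matrix.diagonal d₁ * Uᴴ) * (U * Matrix.diagonal d₂ * Uᴴ)
      = U * Matrix.diagonal d₁ * (Uᴴ * U) * Matrix.diagonal d₂ * Uᴴ := by
        simp only [Matrix.mul_assoc]
    _ = U * (Matrix.diagonal d₁ * Matrix.diagonal d₂) * Uᴴ := by
        rw [hUU, Matrix.mul_one]; simp only [Matrix.mul_assoc]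
    _ = U * Matrix.diagonal (fun i => d₁ i * d₂ i) * Uᴴ := by
        rw [Matrix.diagonal_mul_diagonal]

lemma herm_udu {n : ℕ} (U : Matrix (Fin n) (Fin n) ℂ) (μ : Fin n → ℝ) :
    (U * Matrix.diagonal (fun i => (μ i : ℂ)) * Uᴴ).IsHermitian := by
  unfold Matrix.IsHermitian
  rw [Matrix.conjTranspose_mul, Matrix.conjTranspose_mul, Matrix.conjTranspose_conjTranspose,
    Matrix.diagonal_conjTranspose]
  have : star (fun i => (μ i : ℂ)) = fun i => (μ i : ℂ) := by
    funext i; simp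
  rw [this, Matrix.mul_assoc]

lemma psd_udu {n : ℕ} (U : Matrix (Fin n) (Fin n) ℂ) (μ : Fin n → ℝ) (hμ : ∀ i, 0 ≤ μ i) :
    (U * Matrix.diagonal (fun i => (μ i : ℂ)) * Uᴴ).PosSemidef := by
  refine Matrix.posSemidef_iff_dotProduct_mulVec.mpr ⟨herm_udu U μ, fun x => ?_⟩
  rw [qform_udu]
  have : ∑ i, ((μ i : ℂ)) * (Complex.normSq ((Uᴴ *ᵥ x) i) : ℂ)
      = ((∑ i, μ i * Complex.normSq ((Uᴴ *ᵥ x) i) : ℝ) : ℂ) := by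
    push_cast; rfl
  rw [this]
  rw [Complex.zero_le_real]
  exact Finset.sum_nonneg fun i _ => mul_nonneg (hμ i) (Complex.normSq_nonneg _)

lemma trace_udu {n : ℕ} (U : Matrix (Fin n) (Fin n) ℂ) (hU : U ∈ Matrix.unitaryGroup (Fin n) ℂ)
    (d : Fin n → ℂ) :
    (U * Matrix.diagonal d * Uᴴ).trace = ∑ i, d i := by
  have hUU : Uᴴ * U = 1 := by
    have := Matrix.mem_unitaryGroup_iff'.mp hU
    simpa [Matrix.star_eq_conjTranspose] using this
  rw [Matrix.trace_mul_comm, ← Matrix.mul_assoc, hUU, Matrix.one_mul, Matrix.trace_diagonal]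

lemma traceNorm_udu {n : ℕ} (U : Matrix (Fin n) (Fin n) ℂ)
    (hU : U ∈ Matrix.unitaryGroup (Fin n) ℂ) (μ : Fin n → ℝ) :
    traceNorm (U * Matrix.diagonal (fun i => (μ i : ℂ)) * Uᴴ) = ∑ i, |μ i| := by
  unfold traceNorm
  set B := U * Matrix.diagonal (fun i => (μ i : ℂ)) * Uᴴ with hB
  set S := U * Matrix.diagonal (fun i => ((|μ i| : ℝ) : ℂ)) * Uᴴ with hS
  have hSpsd : S.PosSemidef := psd_udu U _ (fun i => abs_nonneg _)
  have hBh : Bᴴ = B := herm_udu U μ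
  have hsq : S ^ 2 = Bᴴ * B := by
    rw [hBh, pow_two, hS, hB, mul_udu U hU, mul_udu U hU]
    have h : (fun i => ((|μ i| : ℝ) : ℂ) * ((|μ i| : ℝ) : ℂ))
        = fun i => ((μ i : ℝ) : ℂ) * ((μ i : ℝ) : ℂ) := by
      funext i
      rw [← Complex.ofReal_mul, ← Complex.ofReal_mul, abs_mul_abs_self]
    rw [h]
  have : S = CFC.sqrt (Bᴴ * B) :=
    (CFC.sqrt_unique (by rw [← pow_two]; exact hsq) (Matrix.nonneg_iff_posSemidef.mpr hSpsd)).symm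
  rw [← this, hS, trace_udu U hU]
  have : ∑ i, ((|μ i| : ℝ) : ℂ) = ((∑ i, |μ i| : ℝ) : ℂ) := by push_cast; rfl
  rw [this, Complex.ofReal_re]


/-- fidelity bound `|⟨ψ_z|φ_z⟩|² ≥ (1 − 2 d_A δ)/(1 + 2 δ d_A)` for
`ψ_z = √ρ_A V†|z⟩ / ‖·‖` and `φ_z = V†|z⟩ / ‖·‖` when `D(ρ_A, 1/d_A) ≤ δ ≤ 1/(2 d_A)`. -/
theorem fidelity_lower_bound {dA M : ℕ} [NeZero dA]
    (V : Matrix (Fin M) (Fin dA) ℂ) (hV : Vᴴ * V = 1)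
    (e : Fin M → Fin M → ℂ)
    (he : ∀ z w, dotProduct (star (e z)) (e w) = if z = w then 1 else 0)
    (ρA : Matrix (Fin dA) (Fin dA) ℂ) (hρ : ρA.PosSemidef) (hρtr : ρA.trace = 1)
    (δ : ℝ) (hδ : traceDist ρA ((dA : ℂ)⁻¹ • 1) ≤ δ) (hδ' : δ ≤ 1 / (2 * dA)) :
    ∀ z, Vᴴ.mulVec (e z) ≠ 0 →
      (1 - 2 * dA * δ) / (1 + 2 * δ * dA) ≤
        Complex.normSq (dotProduct
          (star (normalizeVec ((CFC.sqrt ρA).mulVec (Vᴴ.mulVec (e z)))))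
          (normalizeVec (Vᴴ.mulVec (e z)))) := by
  intro z hz
  set v : Fin dA → ℂ := Vᴴ.mulVec (e z) with hv
  set w : Fin dA → ℂ := (CFC.sqrt ρA).mulVec v with hw
  have hH : ρA.IsHermitian := hρ.1
  set U : Matrix (Fin dA) (Fin dA) ℂ := (hH.eigenvectorUnitary : Matrix (Fin dA) (Fin dA) ℂ)
    with hUdef
  have hU : U ∈ Matrix.unitaryGroup (Fin dA) ℂ := hH.eigenvectorUnitary.2
  set lam : Fin dA → ℝ := hH.eigenvalues with hlam
  set c : Fin dA → ℂ := Uᴴ *ᵥ v with hc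
  set t : Fin dA → ℝ := fun i => Complex.normSq (c i) with ht
  have ht0 : ∀ i, 0 ≤ t i := fun i => Complex.normSq_nonneg _
  have hUUh : U * Uᴴ = 1 := by
    have := Matrix.mem_unitaryGroup_iff.mp hU
    simpa [Matrix.star_eq_conjTranspose] using this
  -- spectral decompositions
  have hspec : ρA = U * Matrix.diagonal (fun i => ((lam i : ℝ) : ℂ)) * Uᴴ := by
    conv_lhs => rw [hH.spectral_theorem]
    rfl
  have hsqrt : CFC.sqrt ρA = U * Matrix.diagonal (fun i => ((Real.sqrt (lam i) : ℝ) : ℂ)) * Uᴴ := by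
    apply CFC.sqrt_unique _ (Matrix.nonneg_iff_posSemidef.mpr
      (psd_udu U _ (fun i => Real.sqrt_nonneg _)))
    rw [mul_udu U hU]
    conv_rhs => rw [hspec]
    have : (fun i => ((Real.sqrt (lam i) : ℝ) : ℂ) * ((Real.sqrt (lam i) : ℝ) : ℂ))
        = fun i => ((lam i : ℝ) : ℂ) := by
      funext i
      rw [← Complex.ofReal_mul, Real.mul_self_sqrt (hρ.eigenvalues_nonneg i)]
    rw [this]
  have hsqH : (CFC.sqrt ρA)ᴴ = CFC.sqrt ρA :=
    (Matrix.nonneg_iff_posSemidef.mp (CFC.sqrt_nonneg ρA)).1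
  -- dot products expressed via e-vals
  have hdotself : ∀ u : Fin dA → ℂ, dotProduct (star u) u = ((nsq u : ℝ) : ℂ) := by
    intro u
    simp only [dotProduct, Pi.star_apply, nsq]
    push_cast
    exact Finset.sum_congr rfl fun i _ => by
      rw [Complex.normSq_eq_conj_mul_self]; rfl
  have hone : (1 : Matrix (Fin dA) (Fin dA) ℂ)
      = U * Matrix.diagonal (fun _ => ((1 : ℝ) : ℂ)) * Uᴴ := by
    have : Matrix.diagonal (fun _ : Fin dA => ((1:ℝ):ℂ)) = 1 := by
      simp [Matrix.diagonal_one]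
    rw [this, Matrix.mul_one, hUUh]
  have hN : nsq v = ∑ i, t i := by
    have h1 : ((nsq v : ℝ) : ℂ) = ((∑ i, t i : ℝ) : ℂ) := by
      rw [← hdotself v]
      have : dotProduct (star v) v
          = dotProduct (star v) ((U * Matrix.diagonal (fun _ => ((1:ℝ):ℂ)) * Uᴴ) *ᵥ v) := by
        rw [← hone, Matrix.one_mulVec]
      rw [this, qform_udu]
      push_cast
      simp [← hc, ht]
    exact_mod_cast h1
  have hNw : nsq w = ∑ i, lam i * t i := by
    have hww : dotProduct (star w) w
        = dotProduct (star v) (ρA *ᵥ v) := by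
      rw [hw, Matrix.star_mulVec, ← Matrix.dotProduct_mulVec, Matrix.mulVec_mulVec,
        hsqH, CFC.sqrt_mul_sqrt_self ρA (Matrix.nonneg_iff_posSemidef.mpr hρ)]
    have h1 : ((nsq w : ℝ) : ℂ) = ((∑ i, lam i * t i : ℝ) : ℂ) := by
      rw [← hdotself w, hww]
      conv_lhs => rw [hspec]
      rw [qform_udu]
      push_cast
      simp [← hc, ht]
    exact_mod_cast h1
  have hQ1 : dotProduct (star w) v = ((∑ i, Real.sqrt (lam i) * t i : ℝ) : ℂ) := by
    rw [hw, Matrix.star_mulVec, ← Matrix.dotProduct_mulVec, hsqH]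
    conv_lhs => rw [hsqrt]
    rw [qform_udu]
    push_cast
    simp [← hc, ht]
  -- eigenvalue bounds
  have hdpos : (0 : ℝ) < (dA : ℝ) := by
    exact_mod_cast Nat.pos_of_ne_zero (NeZero.ne dA)
  have hBspec : ρA - (dA : ℂ)⁻¹ • 1
      = U * Matrix.diagonal (fun i => ((lam i - (dA : ℝ)⁻¹ : ℝ) : ℂ)) * Uᴴ := by
    have hdiag : Matrix.diagonal (fun i => ((lam i - (dA : ℝ)⁻¹ : ℝ) : ℂ))
        = Matrix.diagonal (fun i => ((lam i : ℝ) : ℂ)) - (dA : ℂ)⁻¹ • 1 := by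
      ext i j
      rcases eq_or_ne i j with rfl | h
      · simp only [Matrix.diagonal_apply_eq, Matrix.sub_apply, Matrix.smul_apply,
          Matrix.one_apply_eq, smul_eq_mul, mul_one]
        push_cast
        ring
      · simp [Matrix.diagonal_apply_ne _ h, Matrix.one_apply_ne h]
    rw [hdiag, Matrix.mul_sub, Matrix.sub_mul, ← hspec]
    congr 1
    rw [Matrix.mul_smul, Matrix.smul_mul, Matrix.mul_one, hUUh]
  have htn : ∑ i, |lam i - (dA : ℝ)⁻¹| ≤ 2 * δ := by
    have := hδ
    unfold traceDist at this
    rw [hBspec, traceNorm_udu U hU] at this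
    linarith
  have hbound : ∀ i, |lam i - (dA : ℝ)⁻¹| ≤ 2 * δ := by
    intro i
    refine le_trans ?_ htn
    exact Finset.single_le_sum (f := fun j => |lam j - (dA : ℝ)⁻¹|)
      (fun j _ => abs_nonneg _) (Finset.mem_univ i)
  have hδ0 : 0 ≤ δ := by
    have h0 : (0:ℝ) ≤ ∑ i, |lam i - (dA : ℝ)⁻¹| :=
      Finset.sum_nonneg fun i _ => abs_nonneg _
    linarith
  -- case split
  by_cases hcase : 1 - 2 * (dA : ℝ) * δ ≤ 0
  · have hden : (0:ℝ) ≤ 1 + 2 * δ * (dA : ℝ) := by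
      have := mul_nonneg (mul_nonneg (by norm_num : (0:ℝ) ≤ 2) hδ0) hdpos.le
      linarith
    exact le_trans (div_nonpos_of_nonpos_of_nonneg hcase hden) (Complex.normSq_nonneg _)
  · push_neg at hcase
    set low : ℝ := (dA : ℝ)⁻¹ - 2 * δ with hlowdef
    set high : ℝ := (dA : ℝ)⁻¹ + 2 * δ with hhighdef
    have hdinv : (dA : ℝ) * (dA : ℝ)⁻¹ = 1 := mul_inv_cancel₀ hdpos.ne'
    have hinvpos : 0 < ((dA : ℝ))⁻¹ := inv_pos.mpr hdpos
    have hlowpos : 0 < low := by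
      have heq : low = ((dA : ℝ))⁻¹ * (1 - 2 * (dA : ℝ) * δ) := by
        rw [hlowdef]; field_simp
      rw [heq]
      exact mul_pos hinvpos hcase
    have hhighpos : 0 < high := by
      rw [hhighdef]
      have := mul_nonneg (by norm_num : (0:ℝ) ≤ 2) hδ0
      linarith
    have hlam_lb : ∀ i, low ≤ lam i := fun i => by
      have := abs_le.mp (hbound i); rw [hlowdef]; linarith [this.1]
    have hlam_ub : ∀ i, lam i ≤ high := fun i => by
      have := abs_le.mp (hbound i); rw [hhighdef]; linarith [this.2]
    have hNpos : 0 < nsq v := by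
      obtain ⟨i, hi⟩ := Function.ne_iff.mp hz
      exact Finset.sum_pos' (fun j _ => Complex.normSq_nonneg _)
        ⟨i, Finset.mem_univ i, Complex.normSq_pos.mpr hi⟩
    set N : ℝ := nsq v with hNdef
    set Q1r : ℝ := ∑ i, Real.sqrt (lam i) * t i with hQ1def
    have hQ1_lb : Real.sqrt low * N ≤ Q1r := by
      rw [hQ1def, hN, Finset.mul_sum]
      exact Finset.sum_le_sum fun i _ =>
        mul_le_mul_of_nonneg_right (Real.sqrt_le_sqrt (hlam_lb i)) (ht0 i)
    have hNw_ub : nsq w ≤ high * N := by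
      rw [hNw, hN, Finset.mul_sum]
      exact Finset.sum_le_sum fun i _ =>
        mul_le_mul_of_nonneg_right (hlam_ub i) (ht0 i)
    have hNw_lb : low * N ≤ nsq w := by
      rw [hNw, hN, Finset.mul_sum]
      exact Finset.sum_le_sum fun i _ =>
        mul_le_mul_of_nonneg_right (hlam_lb i) (ht0 i)
    have hNwpos : 0 < nsq w := lt_of_lt_of_le (mul_pos hlowpos hNpos) hNw_lb
    -- fidelity as a quotient
    have hfid : dotProduct (star (normalizeVec w)) (normalizeVec v)
        = ((Q1r : ℝ) : ℂ) / (((Real.sqrt (nsq w) : ℝ) : ℂ) * ((Real.sqrt (nsq v) : ℝ) : ℂ)) := by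
      rw [← hQ1]
      simp only [dotProduct, normalizeVec, Pi.star_apply, star_div₀, Complex.star_def,
        Complex.conj_ofReal, Finset.sum_div]
      refine Finset.sum_congr rfl fun i _ => ?_
      rw [div_mul_div_comm]
    rw [hfid, Complex.normSq_div, Complex.normSq_mul, Complex.normSq_ofReal,
      Complex.normSq_ofReal, Complex.normSq_ofReal,
      Real.mul_self_sqrt hNwpos.le, Real.mul_self_sqrt hNpos.le]
    have hQ1nonneg : 0 ≤ Q1r := le_trans (by positivity) hQ1_lb
    have hsl : Real.sqrt low * Real.sqrt low = low := Real.mul_self_sqrt hlowpos.le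
    have hQ1sq : low * (N * N) ≤ Q1r * Q1r := by
      have h2 : (Real.sqrt low * N) * (Real.sqrt low * N) = low * (N * N) := by
        rw [mul_mul_mul_comm, hsl]
      calc low * (N * N) = (Real.sqrt low * N) * (Real.sqrt low * N) := h2.symm
        _ ≤ Q1r * Q1r := mul_le_mul hQ1_lb hQ1_lb (by positivity) hQ1nonneg
    have hdenpos : (0:ℝ) < 1 + 2 * δ * (dA : ℝ) := by
      have := mul_nonneg (mul_nonneg (by norm_num : (0:ℝ) ≤ 2) hδ0) hdpos.le
      linarith
    rw [div_le_div_iff₀ hdenpos (mul_pos hNwpos hNpos)]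
    have hid1 : (dA : ℝ) * low = 1 - 2 * (dA : ℝ) * δ := by
      rw [hlowdef, mul_sub, hdinv]; ring
    have hid2 : (dA : ℝ) * high = 1 + 2 * δ * (dA : ℝ) := by
      rw [hhighdef, mul_add, hdinv]; ring
    calc (1 - 2 * (dA : ℝ) * δ) * (nsq w * N)
        = ((dA : ℝ) * low) * (nsq w * N) := by rw [hid1]
      _ ≤ ((dA : ℝ) * low) * ((high * N) * N) := by
          exact mul_le_mul_of_nonneg_left
            (mul_le_mul_of_nonneg_right hNw_ub hNpos.le)
            (mul_nonneg hdpos.le hlowpos.le)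
      _ = (low * (N * N)) * ((dA : ℝ) * high) := by ring
      _ ≤ (Q1r * Q1r) * ((dA : ℝ) * high) :=
          mul_le_mul_of_nonneg_right hQ1sq (mul_nonneg hdpos.le hhighpos.le)
      _ = Q1r * Q1r * (1 + 2 * δ * (dA : ℝ)) := by rw [hid2]
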